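/- arXiv:0911.3370 — 4 statements merged into one kernel-verified Lean document; each statement's English description precedes it below -/
import Mathlib

section
/- Let μ > 0 be non-integer, m = ⌈μ⌉, ν = m - μ, f defined on ℕ_a with a ∈ ℤ⁺. Then for all t ∈ ℕ_{a+ν}: Δ^μ f(t) = Δ_*^μ f(t) + ∑_{k=0}^{m-1} ((t-a)^(ν-m+k)/Γ(ν+k-m+1))·Δ^k f(a), where Δ^μ f(t) = Δ^m(Δ^{-ν} f(t)) is the Riemann–Liouville fractional difference and Δ_*^μ f(t) = Δ^{-ν}(Δ^m f(t)) is the Caputo-like fractional difference. -/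
/-!
Summation by parts turns `Δ (Δ^{-ν} f)` into `Δ^{-ν} (Δ f)` plus the boundary term
`(t-a)^(ν-1)/Γ(ν) · f(a)`. Iterating, the `(k+1)`-st summation by parts produces the boundary
term `(t-a)^(ν-1)/Γ(ν) · Δ^k f(a)`, which is then differenced `m-k-1` more times; since
`Δ_t ((t-a)^(β)/Γ(β+1)) = (t-a)^(β-1)/Γ(β)`, it ends up as `(t-a)^(ν-m+k)/Γ(ν-m+k+1) · Δ^k f(a)`.
-/

open Finset

/-- Generalized falling factorial `t^(α) = Γ(t+1)/Γ(t-α+1)`. -/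
noncomputable def gff (t α : ℝ) : ℝ := Real.Gamma (t + 1) / Real.Gamma (t - α + 1)

/-- Forward difference operator `Δf(t) = f(t+1) - f(t)`. -/
def fdiff (f : ℝ → ℝ) : ℝ → ℝ := fun t => f (t + 1) - f t

/-- The ν-th fractional sum with base point `a`:
`Δ^{-ν} f(t) = (1/Γ(ν)) ∑_{s=a}^{t-ν} (t-s-1)^(ν-1) f(s)`, the sum running over
`s = a, a+1, ..., t-ν` (for `t ∈ ℕ_{a+ν}`, there are `t-ν-a+1` terms). -/
noncomputable def fsum (ν a : ℝ) (f : ℝ → ℝ) (t : ℝ) : ℝ :=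
  (1 / Real.Gamma ν) *
    ∑ j ∈ Finset.range ((⌊t - ν - a⌋).toNat + 1),
      gff (t - (a + j) - 1) (ν - 1) * f (a + j)

/-- The Caputo-like fractional difference `Δ_*^μ f = Δ^{-(⌈μ⌉-μ)} (Δ^{⌈μ⌉} f)`. -/
noncomputable def caputo (μ a : ℝ) (f : ℝ → ℝ) : ℝ → ℝ :=
  fsum ((⌈μ⌉₊ : ℝ) - μ) a (fdiff^[⌈μ⌉₊] f)

lemma fdiff_apply (F : ℝ → ℝ) (t : ℝ) : fdiff F t = F (t + 1) - F t := rfl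

/-- The binomial coefficient `(s choose β)`. Dividing by `Γ(β+1)` makes `Δ` lower `β` by one
with no factor, and with the convention `Γ 0 = 0` this holds for every `β`. -/
noncomputable def gbinom (s β : ℝ) : ℝ := gff s β / Real.Gamma (β + 1)

lemma gff_add_one_sub_gff {s β : ℝ} (hs : s + 1 ≠ 0) (hΓ : Real.Gamma (s - β + 1) ≠ 0) :
    gff (s + 1) β - gff s β = β * gff s (β - 1) := by
  have hsβ : s - β + 1 ≠ 0 := by
    rintro h
    rw [h, Real.Gamma_zero] at hΓ
    exact hΓ rfl
  simp only [gff]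
  rw [show s + 1 + 1 = (s + 1) + 1 by ring, show s + 1 - β + 1 = (s - β + 1) + 1 by ring,
    show s - (β - 1) + 1 = (s - β + 1) + 1 by ring, Real.Gamma_add_one hs,
    Real.Gamma_add_one hsβ]
  field_simp
  ring

lemma gbinom_add_one_sub_gbinom {s β : ℝ} (hs : s + 1 ≠ 0) (hΓ : Real.Gamma (s - β + 1) ≠ 0) :
    gbinom (s + 1) β - gbinom s β = gbinom s (β - 1) := by
  rw [gbinom, gbinom, gbinom, ← sub_div, gff_add_one_sub_gff hs hΓ, sub_add_cancel]
  rcases eq_or_ne β 0 with rfl | hβ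
  · simp [Real.Gamma_zero]
  · rw [Real.Gamma_add_one hβ, mul_div_mul_left _ _ hβ]

lemma fsum_apply_grid (ν a : ℝ) (f : ℝ → ℝ) (n : ℕ) :
    fsum ν a f (a + ν + n) =
      1 / Real.Gamma ν * ∑ j ∈ range (n + 1), gff (ν + n - j - 1) (ν - 1) * f (a + j) := by
  have hfloor : (⌊a + ν + n - ν - a⌋).toNat = n := by
    rw [show a + ν + n - ν - a = (n : ℝ) by ring, Int.floor_natCast, Int.toNat_natCast]
  simp only [fsum, hfloor]
  congr 1
  refine sum_congr rfl fun j _ => ?_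
  congr 2
  ring

lemma fdiff_fsum_apply_grid (ν a : ℝ) (f : ℝ → ℝ) (n : ℕ) :
    fdiff (fsum ν a f) (a + ν + n) =
      fsum ν a (fdiff f) (a + ν + n) + gbinom (ν + n) (ν - 1) * f a := by
  have hnext : a + ν + n + 1 = a + ν + (n + 1 : ℕ) := by push_cast; ring
  simp only [fdiff_apply, hnext, fsum_apply_grid, gbinom, sub_add_cancel]
  rw [sum_range_succ']
  push_cast
  have hshift : ∀ j ∈ range (n + 1),
      gff (ν + (n + 1) - (j + 1) - 1) (ν - 1) * f (a + (j + 1)) =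
        gff (ν + n - j - 1) (ν - 1) * f (a + j + 1) := fun j _ => by ring_nf
  rw [sum_congr rfl hshift, show ν + (n + 1) - 0 - 1 = ν + n by ring, add_zero]
  simp only [mul_sub, sum_sub_distrib]
  ring

lemma fdiff_iterate_fsum_apply_grid {ν : ℝ} (hν : -1 < ν) (a : ℝ) (f : ℝ → ℝ) (m n : ℕ) :
    fdiff^[m] (fsum ν a f) (a + ν + n) =
      fsum ν a (fdiff^[m] f) (a + ν + n) +
        ∑ k ∈ range m, gbinom (ν + n) (ν - m + k) * fdiff^[k] f a := by
  induction m generalizing n with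
  | zero => simp
  | succ m ih =>
    have hnext : a + ν + n + 1 = a + ν + (n + 1 : ℕ) := by push_cast; ring
    have hstep : ∀ k ∈ range m,
        gbinom (ν + (n + 1 : ℕ)) (ν - m + k) * fdiff^[k] f a -
            gbinom (ν + n) (ν - m + k) * fdiff^[k] f a =
          gbinom (ν + n) (ν - (m + 1 : ℕ) + k) * fdiff^[k] f a := by
      intro k hk
      have hkm : (k : ℝ) < m := by exact_mod_cast mem_range.mp hk
      have hs : ν + n + 1 ≠ 0 := by
        have : (0 : ℝ) ≤ n := n.cast_nonneg
        linarith
      push_cast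
      rw [← sub_mul, ← add_assoc, gbinom_add_one_sub_gbinom hs
        (Real.Gamma_pos_of_pos (by linarith)).ne']
      ring_nf
    have hfsum := fdiff_fsum_apply_grid ν a (fdiff^[m] f) n
    rw [fdiff_apply, ← Function.iterate_succ_apply' fdiff] at hfsum
    rw [Function.iterate_succ_apply', fdiff_apply, hnext, ih, ih, ← hnext, sum_range_succ, ← sum_congr rfl hstep, sum_sub_distrib]
    push_cast
    rw [show ν - (m + 1) + m = ν - 1 by ring]
    linear_combination hfsum

theorem stmt8_general (μ ν : ℝ) (m : ℕ)
    (hm : m = ⌈μ⌉₊) (hν : ν = m - μ) (f : ℝ → ℝ) (a n : ℕ) (t : ℝ)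
    (ht : t = a + ν + n) :
    fdiff^[m] (fsum ν a f) t =
      caputo μ a f t +
        ∑ k ∈ Finset.range m,
          gff (t - a) (ν - m + k) / Real.Gamma (ν + k - m + 1) * fdiff^[k] f a := by
  have hν_nonneg : 0 ≤ ν := by
    rw [hν, hm]
    exact sub_nonneg.mpr (Nat.le_ceil μ)
  have hcaputo : caputo μ a f = fsum ν a (fdiff^[m] f) := by
    rw [caputo, hν, hm]
  rw [hcaputo, ht, fdiff_iterate_fsum_apply_grid (by linarith)]
  congr 1
  refine sum_congr rfl fun k _ => ?_
  rw [gbinom, show (a : ℝ) + ν + n - a = ν + n by ring, show ν + k - m + 1 = ν - m + k + 1 by ring]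

theorem stmt8 (μ ν : ℝ) (hμ : 0 < μ) (hni : ∀ n : ℤ, μ ≠ n) (m : ℕ)
    (hm : m = ⌈μ⌉₊) (hν : ν = m - μ) (f : ℝ → ℝ) (a n : ℕ) (t : ℝ)
    (ht : t = a + ν + n) :
    fdiff^[m] (fsum ν a f) t =
      caputo μ a f t +
        ∑ k ∈ Finset.range m,
          gff (t - a) (ν - m + k) / Real.Gamma (ν + k - m + 1) * fdiff^[k] f a :=
  stmt8_general μ ν m hm hν f a n t ht
end

section
/- Let μ > 0 be non-integer, m = ⌈μ⌉, ν = m - μ, f defined on ℕ_a, a ∈ ℤ⁺, and suppose Δ^k f(a) = 0 for k = 0, 1, ..., m-1. Then for all t ∈ ℕ_{a+m}: f(t) = (1/Γ(μ))·∑_{s=a+ν}^{t-μ} (t-s-1)^(μ-1)·Δ_*^μ f(s). -/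
open Finset

/-! Pass to generating functions of the values on the grid `a, a + 1, a + 2, …`. The kernel
`(x + k - 1)^(x - 1) / Γ(x)` is `multichoose x k`, the `k`-th coefficient of `(1 - X)^(-x)`, so a
fractional sum of order `x` is multiplication by `(1 - X)^(-x)`. The vanishing initial differences
give `(1 - X)^m F = X^m G` for the series `F` of `f` and `G` of `Δ^m f`, hence
`F = X^m (1 - X)^(-m) G`, and the claim reduces to `(1 - X)^(-μ) (1 - X)^(-ν) = (1 - X)^(-m)`,
which is Vandermonde's identity for `multichoose`. -/

theorem Ring.multichoose_add {R : Type*} [CommRing R] [BinomialRing R] (r s : R) (k : ℕ) :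
    Ring.multichoose (r + s) k =
      ∑ ij ∈ antidiagonal k, Ring.multichoose r ij.1 * Ring.multichoose s ij.2 := by
  -- `multichoose r k = ± choose (-r) k`, so this is Chu–Vandermonde at `-r` and `-s`.
  have h := Ring.add_choose_eq (r := -r) (s := -s) k (Commute.all _ _)
  rw [← neg_add, Ring.choose_neg'] at h
  rw [← smul_left_cancel_iff (Int.negOnePow k), h, smul_sum]
  refine sum_congr rfl fun ij hij => ?_
  rw [Ring.choose_neg', Ring.choose_neg', smul_mul_smul_comm, ← Int.negOnePow_add,
    ← HasAntidiagonal.mem_antidiagonal.mp hij, Nat.cast_add]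

theorem Real.Gamma_add_nat_eq_mul_multichoose {x : ℝ} (hx : ∀ n : ℕ, x ≠ -n) (k : ℕ) :
    Real.Gamma (x + k) = Real.Gamma x * k.factorial * Ring.multichoose x k := by
  rw [mul_assoc, ← nsmul_eq_mul, Ring.factorial_nsmul_multichoose_eq_ascPochhammer,
    Polynomial.ascPochhammer_smeval_eq_eval]
  induction k with
  | zero => simp
  | succ k ih =>
    have hxk : x + k ≠ 0 := fun h => hx k (by linarith)
    rw [Nat.cast_succ, ← add_assoc, Real.Gamma_add_one hxk, ih, ascPochhammer_succ_eval]
    ring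

theorem gff_add_nat_sub_one {x : ℝ} (hx : ∀ n : ℕ, x ≠ -n) (k : ℕ) :
    gff (x + k - 1) (x - 1) = Real.Gamma x * Ring.multichoose x k := by
  rw [gff, sub_add_cancel, Real.Gamma_add_nat_eq_mul_multichoose hx,
    show x + k - 1 - (x - 1) + 1 = (k : ℝ) + 1 by ring, Real.Gamma_nat_eq_factorial]
  field_simp

namespace PowerSeries

variable {R : Type*} [CommRing R] [BinomialRing R]

/-- The binomial series `(1 - X)^(-r)`. -/
noncomputable def multichooseSeries (r : R) : R⟦X⟧ := mk (Ring.multichoose r)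

theorem multichooseSeries_add (r s : R) :
    multichooseSeries (r + s) = multichooseSeries r * multichooseSeries s := by
  ext k
  simp [multichooseSeries, coeff_mul, Ring.multichoose_add]

theorem multichooseSeries_one_mul_one_sub_X : multichooseSeries (1 : R) * (1 - X) = 1 := by
  ext k
  cases k with
  | zero => simp [multichooseSeries]
  | succ k => simp [multichooseSeries, mul_sub, coeff_one]

theorem multichooseSeries_natCast_mul_one_sub_X_pow (m : ℕ) :
    multichooseSeries (m : R) * (1 - X) ^ m = 1 := by
  induction m with
  | zero => ext k; cases k <;> simp [multichooseSeries, coeff_one]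
  | succ m ih =>
    rw [Nat.cast_succ, multichooseSeries_add, pow_succ, mul_mul_mul_comm, ih,
      multichooseSeries_one_mul_one_sub_X, one_mul]

end PowerSeries

open PowerSeries

noncomputable def gridSeries (h : ℝ → ℝ) (b : ℝ) : ℝ⟦X⟧ := mk fun n => h (b + n)

theorem one_sub_X_mul_gridSeries (h : ℝ → ℝ) (b : ℝ) :
    (1 - X) * gridSeries h b = C (h b) + X * gridSeries (fdiff h) b := by
  ext n
  cases n with
  | zero => simp [gridSeries]
  | succ n => simp [gridSeries, sub_mul, fdiff, add_assoc]

theorem one_sub_X_pow_mul_gridSeries {f : ℝ → ℝ} {b : ℝ} {m : ℕ}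
    (hz : ∀ k < m, fdiff^[k] f b = 0) :
    (1 - X) ^ m * gridSeries f b = X ^ m * gridSeries (fdiff^[m] f) b := by
  induction m with
  | zero => simp
  | succ m ih =>
    rw [pow_succ', mul_assoc, ih fun k hk => hz k (by omega), mul_left_comm,
      one_sub_X_mul_gridSeries, hz m (by omega), map_zero, zero_add,
      Function.iterate_succ_apply', pow_succ, mul_assoc]

/-- Discrete Taylor formula: `f(b + m + j) = ∑_{s ≤ j} multichoose m (j - s) * Δ^m f(b + s)`. -/
theorem gridSeries_eq_X_pow_mul {f : ℝ → ℝ} {b : ℝ} {m : ℕ}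
    (hz : ∀ k < m, fdiff^[k] f b = 0) :
    gridSeries f b = X ^ m * (gridSeries (fdiff^[m] f) b * multichooseSeries (m : ℝ)) := by
  calc gridSeries f b
      = (1 - X) ^ m * gridSeries f b * multichooseSeries (m : ℝ) := by
        rw [mul_right_comm, mul_comm _ (multichooseSeries _),
          multichooseSeries_natCast_mul_one_sub_X_pow, one_mul]
    _ = _ := by rw [one_sub_X_pow_mul_gridSeries hz, mul_assoc]

theorem sum_gff_mul_eq_coeff {ν : ℝ} (hν : 0 < ν) (b : ℝ) (h : ℝ → ℝ) (n : ℕ) :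
    (1 / Real.Gamma ν) *
        ∑ i ∈ range (n + 1), gff (b + ν + n - (b + i) - 1) (ν - 1) * h (b + i) =
      coeff n (gridSeries h b * multichooseSeries ν) := by
  rw [coeff_mul, Nat.sum_antidiagonal_eq_sum_range_succ
    (fun i l => coeff i (gridSeries h b) * coeff l (multichooseSeries ν)), mul_sum]
  refine sum_congr rfl fun i hi => ?_
  have hin : i ≤ n := Nat.lt_succ_iff.mp (mem_range.mp hi)
  have hν' : ∀ k : ℕ, ν ≠ -k := fun k h => by linarith [(k.cast_nonneg : (0 : ℝ) ≤ k)]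
  rw [show b + ν + n - (b + i) - 1 = ν + ((n - i : ℕ) : ℝ) - 1 by
    push_cast [Nat.cast_sub hin]; ring, gff_add_nat_sub_one hν']
  simp only [gridSeries, multichooseSeries, coeff_mk]
  field_simp [(Real.Gamma_pos_of_pos hν).ne']

theorem fsum_add_nat (ν b : ℝ) (h : ℝ → ℝ) (n : ℕ) :
    fsum ν b h (b + ν + n) =
      (1 / Real.Gamma ν) *
        ∑ i ∈ range (n + 1), gff (b + ν + n - (b + i) - 1) (ν - 1) * h (b + i) := by
  rw [fsum, show b + ν + n - ν - b = (n : ℝ) by ring, Int.floor_natCast, Int.toNat_natCast]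

theorem gridSeries_caputo {μ : ℝ} (hμ : μ < ⌈μ⌉₊) (a : ℝ) (f : ℝ → ℝ) :
    gridSeries (caputo μ a f) (a + (⌈μ⌉₊ - μ)) =
      gridSeries (fdiff^[⌈μ⌉₊] f) a * multichooseSeries ((⌈μ⌉₊ : ℝ) - μ) := by
  ext n
  rw [← sum_gff_mul_eq_coeff (sub_pos.mpr hμ), ← fsum_add_nat, gridSeries, coeff_mk]
  rfl

theorem stmt10 (μ ν : ℝ) (hμ : 0 < μ) (hni : ∀ n : ℤ, μ ≠ n) (m : ℕ)
    (hm : m = ⌈μ⌉₊) (hν : ν = m - μ) (f : ℝ → ℝ) (a : ℕ)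
    (hz : ∀ k < m, fdiff^[k] f a = 0) (j : ℕ) (t : ℝ) (ht : t = a + m + j) :
    f t =
      (1 / Real.Gamma μ) *
        ∑ i ∈ Finset.range (j + 1),
          gff (t - (a + ν + i) - 1) (μ - 1) * caputo μ a f (a + ν + i) := by
  have hμm : μ < m := hm ▸ (Nat.le_ceil μ).lt_of_ne fun h => hni ⌈μ⌉₊ (by exact_mod_cast h)
  have hcaputo : gridSeries (caputo μ a f) (a + ν) =
      gridSeries (fdiff^[m] f) a * multichooseSeries ν := by
    subst hm hν
    exact gridSeries_caputo hμm a f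
  calc f t = coeff (j + m) (gridSeries f a) := by
        simp [gridSeries, ht, add_assoc, add_comm (j : ℝ)]
    _ = coeff j (gridSeries (fdiff^[m] f) a * multichooseSeries (ν + μ)) := by
        rw [gridSeries_eq_X_pow_mul hz, coeff_X_pow_mul, hν, sub_add_cancel]
    _ = coeff j (gridSeries (caputo μ a f) (a + ν) * multichooseSeries μ) := by
        rw [hcaputo, multichooseSeries_add, mul_assoc]
    _ = _ := by
        rw [← sum_gff_mul_eq_coeff hμ, show t = a + ν + μ + j by rw [ht, hν]; ring]
end

section
/- Let μ > p, p ∈ ℕ, μ non-integer, m = ⌈μ⌉, ν = m - μ, t ∈ ℕ_{a+m-p}, f defined on ℕ_a, a ∈ ℤ⁺. Then |Δ^p f(t) - ∑_{k=p}^{m-1} ((t-a)^(k-p)/(k-p)!)·Δ^k f(a)| ≤ ((t-a-ν)^(μ-p)/Γ(μ-p+1))·max_{s ∈ {a+ν, ..., t-μ+p}} |Δ_*^μ f(s)|. -/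
/-!
Put `h n = f (a + n)`. On sequences, the fractional sum of order `α` is the Cauchy product with
`n ↦ multichoose α n`, the coefficients of `(1 - X) ^ (-α)`; by Chu–Vandermonde these sums
compose additively in the order. The discrete Taylor formula identifies the left-hand side with
the integer-order sum `Δ^{-(m-p)} Δ^m h`, and splitting `m - p = (μ - p) + ν` turns this into
`Δ^{-(μ-p)}` applied to the Caputo difference `Δ^{-ν} Δ^m h`. The coefficients being positive,
`Δ^{-(μ-p)}` of a sequence bounded by `M` on `[0, j]` is at most `multichoose (μ - p + 1) j * M`
at `j`, and this coefficient is the Gamma quotient of the right-hand side.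
-/

open Finset

namespace Ring

variable {R : Type*} [CommRing R] [BinomialRing R]

theorem multichoose_add_s12 (r s : R) (k : ℕ) :
    multichoose (r + s) k = ∑ ij ∈ antidiagonal k, multichoose r ij.1 * multichoose s ij.2 := by
  have h := add_choose_eq k (Commute.all (-r) (-s))
  rw [← neg_add, choose_neg'] at h
  simp only [choose_neg', smul_mul_smul_comm, ← Int.negOnePow_add] at h
  rwa [sum_congr rfl fun ij hij => by rw [← Nat.cast_add, mem_antidiagonal.mp hij], ← smul_sum,
    smul_left_cancel_iff] at h

theorem factorial_mul_multichoose (r : R) (n : ℕ) :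
    (n.factorial : R) * multichoose r n = (ascPochhammer R n).eval r := by
  rw [← nsmul_eq_mul, factorial_nsmul_multichoose_eq_ascPochhammer,
    Polynomial.ascPochhammer_smeval_eq_eval]

theorem multichoose_natCast_add_one (q n : ℕ) :
    multichoose ((q : R) + 1) n = ((q + n).choose n : R) := by
  rw [multichoose_eq, ← choose_natCast]
  push_cast
  ring_nf

theorem multichoose_pos [LinearOrder R] [IsStrictOrderedRing R] {r : R} (hr : 0 < r) (n : ℕ) :
    0 < multichoose r n :=
  pos_of_mul_pos_right (factorial_mul_multichoose r n ▸ ascPochhammer_pos n r hr)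
    (Nat.cast_nonneg _)

end Ring

open Ring fwdDiff

theorem Real.Gamma_add_natCast {α : ℝ} (hα : 0 < α) (n : ℕ) :
    Real.Gamma (α + n) = Real.Gamma α * (ascPochhammer ℝ n).eval α := by
  induction n with
  | zero => simp
  | succ n ih =>
    rw [Nat.cast_succ, ← add_assoc, Real.Gamma_add_one (by positivity), ih,
      ascPochhammer_succ_eval]
    ring

lemma gff_natCast_div_factorial {N r : ℕ} (h : r ≤ N) :
    gff N r / r.factorial = N.choose r := by
  rw [gff, show (N : ℝ) - r + 1 = ((N - r : ℕ) : ℝ) + 1 by push_cast [h]; ring,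
    Real.Gamma_nat_eq_factorial, Real.Gamma_nat_eq_factorial, Nat.cast_choose ℝ h, div_div,
    mul_comm]

lemma gff_sub_one_add_natCast {α : ℝ} (hα : 0 < α) (n : ℕ) :
    gff (α - 1 + n) (α - 1) = Real.Gamma α * multichoose α n := by
  rw [gff, show α - 1 + n + 1 = α + n by ring, show α - 1 + n - (α - 1) + 1 = n + 1 by ring,
    Real.Gamma_nat_eq_factorial, Real.Gamma_add_natCast hα, ← factorial_mul_multichoose]
  field_simp

/-- `fracSumNat α g n` is the fractional sum `Δ^{-α} g (α + n)` with base point `0`, i.e.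
`∑_{s ≤ n} (n - s + α - 1)^(α - 1) g s / Γ α`. -/
noncomputable def fracSumNat (α : ℝ) (g : ℕ → ℝ) (n : ℕ) : ℝ :=
  ∑ ij ∈ antidiagonal n, multichoose α ij.1 * g ij.2

section fracSumNat

open PowerSeries

variable (α β : ℝ) (g : ℕ → ℝ)

lemma mk_fracSumNat : mk (fracSumNat α g) = mk (multichoose α) * mk g := by
  ext n
  simp [fracSumNat, coeff_mul]

lemma fracSumNat_fracSumNat : fracSumNat α (fracSumNat β g) = fracSumNat (α + β) g := by
  have hmk : mk (multichoose (α + β)) = mk (multichoose α) * mk (multichoose β) := by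
    ext n
    simp [coeff_mul, multichoose_add_s12]
  funext n
  have h := congrArg (coeff n) (show mk (fracSumNat α (fracSumNat β g)) =
      mk (fracSumNat (α + β) g) by simp only [mk_fracSumNat, hmk, mul_assoc])
  simpa using h

lemma fracSumNat_zero (n : ℕ) : fracSumNat 0 g n = g n := by
  rw [fracSumNat, Nat.sum_antidiagonal_eq_sum_range_succ_mk, sum_range_succ']
  simp

lemma fracSumNat_const (c : ℝ) (n : ℕ) :
    fracSumNat α (fun _ => c) n = multichoose (α + 1) n * c := by
  simp [fracSumNat, multichoose_add_s12, sum_mul]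

lemma fracSumNat_sub (g' : ℕ → ℝ) (n : ℕ) :
    fracSumNat α (g - g') n = fracSumNat α g n - fracSumNat α g' n := by
  simp [fracSumNat, mul_sub]

lemma fracSumNat_one_fwdDiff (n : ℕ) : fracSumNat 1 (Δ_[1] g) n = g (n + 1) - g 0 := by
  rw [fracSumNat, ← Nat.sum_antidiagonal_swap]
  simp only [Prod.fst_swap, Prod.snd_swap, multichoose_one, one_mul]
  rw [Nat.sum_antidiagonal_eq_sum_range_succ_mk]
  exact sum_range_sub g (n + 1)

end fracSumNat

lemma sum_range_succ_choose_succ_mul (n r : ℕ) (x : ℕ → ℝ) :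
    ∑ k ∈ range (r + 1), ((n + 1).choose k : ℝ) * x k =
      ∑ k ∈ range r, (n.choose k : ℝ) * (x k + x (k + 1)) + n.choose r * x r := by
  induction r with
  | zero => simp
  | succ r ih =>
    rw [sum_range_succ, ih, sum_range_succ, Nat.choose_succ_succ]
    push_cast
    ring

lemma fracSumNat_natCast_fwdDiff_iter (r : ℕ) (h : ℕ → ℝ) (j : ℕ) :
    fracSumNat r (Δ_[1] ^[r] h) j =
      h (r + j) - ∑ k ∈ range r, ((r + j).choose k : ℝ) * Δ_[1] ^[k] h 0 := by
  induction r generalizing h with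
  | zero => simp [fracSumNat_zero]
  | succ r ih =>
    have hstep : fracSumNat 1 (Δ_[1] ^[r + 1] h) =
        Δ_[1] ^[r] (fun n => h (n + 1)) - fun _ => Δ_[1] ^[r] h 0 := by
      funext n
      rw [Function.iterate_succ_apply', fracSumNat_one_fwdDiff, Pi.sub_apply,
        fwdDiff_iter_comp_add]
    have hshift : ∀ k,
        Δ_[1] ^[k] (fun n => h (n + 1)) 0 = Δ_[1] ^[k] h 0 + Δ_[1] ^[k + 1] h 0 := by
      intro k
      rw [fwdDiff_iter_comp_add, Function.iterate_succ_apply', fwdDiff]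
      ring
    rw [Nat.cast_succ, ← fracSumNat_fracSumNat, hstep, fracSumNat_sub, ih, fracSumNat_const,
      multichoose_natCast_add_one, ← Nat.choose_symm_add, show r + 1 + j = r + j + 1 by ring,
      sum_range_succ_choose_succ_mul]
    simp only [hshift]
    ring

lemma abs_fracSumNat_le {α : ℝ} (hα : 0 < α) (g : ℕ → ℝ) (n : ℕ) :
    |fracSumNat α g n| ≤
      multichoose (α + 1) n * (range (n + 1)).sup' nonempty_range_add_one (fun i => |g i|) := by
  rw [← fracSumNat_const]
  refine (abs_sum_le_sum_abs _ _).trans (sum_le_sum fun ij hij => ?_)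
  have hle : ij.2 ∈ range (n + 1) := mem_range.mpr (Nat.antidiagonal.snd_lt hij)
  rw [abs_mul, abs_of_pos (multichoose_pos hα _)]
  exact mul_le_mul_of_nonneg_left (le_sup' (fun i => |g i|) hle) (multichoose_pos hα _).le

lemma fdiff_eq_fwdDiff : fdiff = fwdDiff 1 := rfl

lemma iterate_fdiff_add_natCast (f : ℝ → ℝ) (x : ℝ) (k n : ℕ) :
    fdiff^[k] f (x + n) = Δ_[1] ^[k] (fun i : ℕ => f (x + i)) n := by
  simp [fdiff_eq_fwdDiff, fwdDiff_iter_eq_sum_shift, add_assoc]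

lemma fsum_add_natCast {ν : ℝ} (hν : 0 < ν) (a : ℝ) (g : ℝ → ℝ) (i : ℕ) :
    fsum ν a g (a + ν + i) = fracSumNat ν (fun n => g (a + n)) i := by
  have hfloor : (⌊a + ν + i - ν - a⌋).toNat = i := by
    rw [show a + ν + i - ν - a = (i : ℝ) by ring, Int.floor_natCast, Int.toNat_natCast]
  rw [fsum, hfloor, fracSumNat, ← Nat.sum_antidiagonal_swap,
    Nat.sum_antidiagonal_eq_sum_range_succ_mk, mul_sum]
  simp only [Prod.fst_swap, Prod.snd_swap]
  refine sum_congr rfl fun s hs => ?_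
  have hsi : s ≤ i := Nat.lt_succ_iff.mp (mem_range.mp hs)
  rw [show a + ν + i - (a + s) - 1 = ν - 1 + ((i - s : ℕ) : ℝ) by push_cast [hsi]; ring,
    gff_sub_one_add_natCast hν]
  field_simp [(Real.Gamma_pos_of_pos hν).ne']

lemma caputo_add_natCast {μ : ℝ} (hμ : 0 < (⌈μ⌉₊ : ℝ) - μ) (a : ℝ) (f : ℝ → ℝ) (i : ℕ) :
    caputo μ a f (a + ((⌈μ⌉₊ : ℝ) - μ) + i) =
      fracSumNat ((⌈μ⌉₊ : ℝ) - μ) (Δ_[1] ^[⌈μ⌉₊] (fun n : ℕ => f (a + n))) i := by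
  rw [caputo, fsum_add_natCast hμ]
  simp only [iterate_fdiff_add_natCast]

lemma iterate_fdiff_sub_sum_Ico_eq_fracSumNat (f : ℝ → ℝ) (a : ℝ) (p r j : ℕ) :
    fdiff^[p] f (a + (r + j : ℕ)) -
        ∑ k ∈ Ico p (p + r), gff (r + j : ℕ) ((k : ℝ) - p) / ((k - p).factorial : ℝ) *
          fdiff^[k] f a =
      fracSumNat r (Δ_[1] ^[p + r] (fun n : ℕ => f (a + n))) j := by
  have hbase : ∀ k, fdiff^[k] f a = Δ_[1] ^[k] (fun n : ℕ => f (a + n)) 0 := fun k => by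
    simpa using iterate_fdiff_add_natCast f a k 0
  rw [add_comm p r, Function.iterate_add_apply, fracSumNat_natCast_fwdDiff_iter,
    iterate_fdiff_add_natCast, sum_Ico_eq_sum_range, Nat.add_sub_cancel]
  congr 1
  refine sum_congr rfl fun k hk => ?_
  rw [Nat.cast_add p k, add_sub_cancel_left, Nat.add_sub_cancel_left,
    gff_natCast_div_factorial (by have := mem_range.mp hk; omega), hbase, add_comm p k,
    Function.iterate_add_apply]

theorem stmt12 (μ ν : ℝ) (p : ℕ) (hμ : (p : ℝ) < μ) (hni : ∀ n : ℤ, μ ≠ n)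
    (m : ℕ) (hm : m = ⌈μ⌉₊) (hν : ν = m - μ) (f : ℝ → ℝ) (a j : ℕ) (t : ℝ)
    (ht : t = a + m - p + j) :
    |fdiff^[p] f t -
        ∑ k ∈ Finset.Ico p m,
          gff (t - a) ((k : ℝ) - p) / ((k - p).factorial : ℝ) * fdiff^[k] f a| ≤
      gff (t - a - ν) (μ - p) / Real.Gamma (μ - p + 1) *
        (Finset.range (j + 1)).sup' Finset.nonempty_range_add_one
          (fun i => |caputo μ a f (a + ν + i)|) := by
  have hμm : μ < m := lt_of_le_of_ne (hm ▸ Nat.le_ceil μ) (by simpa using hni m)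
  have hν0 : 0 < ν := by linarith
  have hpμ : 0 < μ - p := by linarith
  have hpm : p < m := by exact_mod_cast hμ.trans hμm
  obtain ⟨r, rfl⟩ : ∃ r, m = p + r := ⟨m - p, by omega⟩
  obtain rfl : t = a + (r + j : ℕ) := by rw [ht]; push_cast; ring
  have hr : (r : ℝ) = (μ - p) + ν := by rw [hν]; push_cast; ring
  have hcaputo : fracSumNat ν (Δ_[1] ^[p + r] (fun n : ℕ => f (a + n))) =
      fun i : ℕ => caputo μ a f (a + ν + i) := by
    funext i
    subst hν
    rw [hm] at hν0 ⊢
    rw [caputo_add_natCast hν0]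
  have hcoeff : gff (a + (r + j : ℕ) - a - ν) (μ - p) / Real.Gamma (μ - p + 1) =
      multichoose (μ - p + 1) j := by
    have h := gff_sub_one_add_natCast (show 0 < μ - p + 1 by linarith) j
    rw [add_sub_cancel_right] at h
    rw [show (a : ℝ) + (r + j : ℕ) - a - ν = μ - p + j by push_cast; linarith, h,
      mul_div_cancel_left₀ _ (Real.Gamma_pos_of_pos (by linarith)).ne']
  rw [hcoeff, add_sub_cancel_left, iterate_fdiff_sub_sum_Ico_eq_fracSumNat, hr,
    ← fracSumNat_fracSumNat, hcaputo]
  exact abs_fracSumNat_le hpμ _ j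
end

section
/- Let μ > p, p ∈ ℤ⁺, μ non-integer, m = ⌈μ⌉, ν = m - μ, f defined on ℕ_a, a ∈ ℤ⁺, with Δ^k f(a) = 0 for k = p, ..., m-1. Let γ, δ > 1 with 1/γ + 1/δ = 1, r ≥ 1, and b ≥ a+m-p. Then (∑_{j=a+m-p}^{b} |Δ^p f(j)|^r)^{1/r} ≤ (1/Γ(μ-p))·[∑_{j=a+m-p}^{b} (∑_{s=a+ν}^{j-μ+p} ((j-s-1)^(μ-p-1))^γ)^{r/γ}]^{1/r}·(∑_{s=a+ν}^{b-μ+p} |Δ_*^μ f(s)|^δ)^{1/δ}. -/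
open Finset

/-!
Along `a + ν + ℕ` the fractional sum of order `ν` is a convolution with the coefficients of
`(1 - X) ^ (-ν)`: with `G_a g = ∑ g (a + n) Xⁿ`, the Caputo difference has generating function
`G_a (Δ^m f) · (1 - X) ^ (-ν)`. The vanishing of `Δ^k f (a)` for `p ≤ k < m` is a discrete Taylor
formula, `(1 - X) ^ (m - p) · G_a (Δ^p f) = X ^ (m - p) · G_a (Δ^m f)`. As
`(1 - X) ^ (-(m - p)) = (1 - X) ^ (-ν) · (1 - X) ^ (-(μ - p))`, `Δ^p f` is the fractional sum of
order `μ - p`, based at `a + ν`, of the Caputo difference. Hölder's inequality with exponents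
`γ, δ` bounds each value of `Δ^p f`, and summing `r`-th powers gives the inequality.
-/

open PowerSeries

/-- `(1 - X) ^ (-x)`, whose coefficients `Γ(x + n) / (Γ(x) n!)` are the weights of the fractional
sum of order `x`. -/
noncomputable def invOneSubRpow (x : ℝ) : PowerSeries ℝ :=
  rescale (-1) (binomialSeries ℝ (-x))

theorem coeff_invOneSubRpow (x : ℝ) (n : ℕ) :
    coeff n (invOneSubRpow x) = Ring.multichoose x n := by
  rw [invOneSubRpow, coeff_rescale, binomialSeries_coeff, Ring.choose_neg', smul_eq_mul, mul_one,
    Units.smul_def, zsmul_eq_mul, Int.cast_negOnePow_natCast, ← mul_assoc, ← mul_pow]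
  norm_num

theorem invOneSubRpow_add (x y : ℝ) :
    invOneSubRpow (x + y) = invOneSubRpow x * invOneSubRpow y := by
  rw [invOneSubRpow, neg_add, binomialSeries_add, map_mul]
  rfl

theorem invOneSubRpow_natCast_mul_one_sub_X_pow (q : ℕ) :
    invOneSubRpow q * (1 - X) ^ q = 1 := by
  have h : (1 - X : PowerSeries ℝ) ^ q = rescale (-1) (binomialSeries ℝ (q : ℝ)) := by
    rw [binomialSeries_nat, map_pow, map_add, map_one, rescale_X, map_neg, map_one, neg_one_mul,
      sub_eq_add_neg]
  rw [h, invOneSubRpow, ← map_mul, ← binomialSeries_add, neg_add_cancel, binomialSeries_zero,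
    map_one]

theorem Real.Gamma_add_natCast_eq_mul_multichoose (x : ℝ) (hx : 0 < x) (n : ℕ) :
    Real.Gamma (x + n) = Real.Gamma x * n.factorial * Ring.multichoose x n := by
  rw [mul_assoc, ← nsmul_eq_mul, Ring.factorial_nsmul_multichoose_eq_ascPochhammer,
    Polynomial.ascPochhammer_smeval_eq_eval]
  induction n with
  | zero => simp
  | succ n ih =>
    rw [Nat.cast_succ, ← add_assoc, Real.Gamma_add_one (by positivity), ih,
      ascPochhammer_succ_eval]
    ring

theorem gff_add_natCast_sub_one {x : ℝ} (hx : 0 < x) (n : ℕ) :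
    gff (x + n - 1) (x - 1) = Real.Gamma x * Ring.multichoose x n := by
  rw [gff, sub_add_cancel, show x + n - 1 - (x - 1) + 1 = n + 1 by ring,
    Real.Gamma_nat_eq_factorial, Real.Gamma_add_natCast_eq_mul_multichoose x hx]
  field_simp

noncomputable def genFun (a : ℝ) (g : ℝ → ℝ) : PowerSeries ℝ :=
  mk fun n => g (a + n)

theorem one_sub_X_mul_genFun (a : ℝ) (g : ℝ → ℝ) :
    (1 - X) * genFun a g = C (g a) + X * genFun a (fdiff g) := by
  ext (_ | n)
  · simp [genFun, sub_mul]
  · simp only [genFun, sub_mul, one_mul, map_sub, coeff_mk, Nat.cast_add, Nat.cast_one,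
      coeff_succ_X_mul, fdiff, map_add, coeff_succ_C, zero_add, sub_left_inj]
    ring_nf

theorem one_sub_X_pow_mul_genFun {a : ℝ} {g : ℝ → ℝ} {q : ℕ}
    (hg : ∀ k < q, fdiff^[k] g a = 0) :
    (1 - X) ^ q * genFun a g = X ^ q * genFun a (fdiff^[q] g) := by
  induction q generalizing g with
  | zero => simp
  | succ q ih =>
    rw [pow_succ, mul_assoc, one_sub_X_mul_genFun, show g a = 0 from hg 0 q.succ_pos, map_zero,
      zero_add, mul_left_comm, ih fun k hk => hg (k + 1) (by omega), pow_succ', mul_assoc]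
    rfl

theorem apply_add_natCast_add_eq_coeff {a : ℝ} {g : ℝ → ℝ} {q : ℕ}
    (hg : ∀ k < q, fdiff^[k] g a = 0) (n : ℕ) :
    g (a + q + n) = coeff n (genFun a (fdiff^[q] g) * invOneSubRpow q) := by
  have h : genFun a g = X ^ q * (genFun a (fdiff^[q] g) * invOneSubRpow q) := by
    calc genFun a g = (invOneSubRpow q * (1 - X) ^ q) * genFun a g := by
          rw [invOneSubRpow_natCast_mul_one_sub_X_pow, one_mul]
      _ = X ^ q * (genFun a (fdiff^[q] g) * invOneSubRpow q) := by
          rw [mul_assoc, one_sub_X_pow_mul_genFun hg]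
          ring
  have := congrArg (coeff (n + q)) h
  rwa [coeff_X_pow_mul, genFun, coeff_mk, Nat.cast_add, add_comm (n : ℝ), ← add_assoc] at this

theorem fsum_add_add_natCast {ν : ℝ} (hν : 0 < ν) (a : ℝ) (g : ℝ → ℝ) (i : ℕ) :
    fsum ν a g (a + ν + i) = coeff i (genFun a g * invOneSubRpow ν) := by
  have hfloor : (⌊a + ν + i - ν - a⌋).toNat = i := by
    rw [show a + ν + i - ν - a = (i : ℝ) by ring, Int.floor_natCast, Int.toNat_natCast]
  rw [fsum, hfloor, coeff_mul, Finset.Nat.sum_antidiagonal_eq_sum_range_succ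
    (fun j k => coeff j (genFun a g) * coeff k (invOneSubRpow ν)), mul_sum]
  refine sum_congr rfl fun j hj => ?_
  have harg : a + ν + i - (a + j) - 1 = ν + ((i - j : ℕ) : ℝ) - 1 := by
    rw [Nat.cast_sub (Nat.lt_succ_iff.mp (mem_range.mp hj))]
    ring
  rw [harg, gff_add_natCast_sub_one hν, coeff_invOneSubRpow, genFun, coeff_mk]
  field_simp [(Real.Gamma_pos_of_pos hν).ne']

theorem iterate_fdiff_eq_fsum_caputo {μ ν : ℝ} {p m : ℕ} (hpμ : (p : ℝ) < μ) (hμm : μ < m)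
    (hm : m = ⌈μ⌉₊) (hν : ν = m - μ) {f : ℝ → ℝ} {a : ℝ}
    (hz : ∀ k, p ≤ k → k ≤ m - 1 → fdiff^[k] f a = 0) (n : ℕ) :
    fdiff^[p] f (a + (m - p : ℕ) + n) =
      fsum (μ - p) (a + ν) (caputo μ a f) (a + (m - p : ℕ) + n) := by
  have hν0 : 0 < ν := by linarith
  have hpm : p ≤ m := by exact_mod_cast (hpμ.trans hμm).le
  have hsplit : ((m - p : ℕ) : ℝ) = ν + (μ - p) := by
    rw [Nat.cast_sub hpm, hν]
    ring
  have hcaputo : genFun (a + ν) (caputo μ a f) = genFun a (fdiff^[m] f) * invOneSubRpow ν := by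
    ext i
    rw [genFun, coeff_mk, caputo, ← hm, ← hν, fsum_add_add_natCast hν0]
  have hvanish : ∀ k < m - p, fdiff^[k] (fdiff^[p] f) a = 0 := fun k hk => by
    rw [← Function.iterate_add_apply]
    exact hz _ (by omega) (by omega)
  calc fdiff^[p] f (a + (m - p : ℕ) + n)
      = coeff n (genFun a (fdiff^[m] f) * invOneSubRpow (m - p : ℕ)) := by
        rw [apply_add_natCast_add_eq_coeff hvanish, ← Function.iterate_add_apply,
          Nat.sub_add_cancel hpm]
    _ = coeff n (genFun (a + ν) (caputo μ a f) * invOneSubRpow (μ - p)) := by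
        rw [hcaputo, hsplit, invOneSubRpow_add, mul_assoc]
    _ = _ := by
        rw [← fsum_add_add_natCast (sub_pos.2 hpμ), hsplit, add_assoc a, add_assoc a]

theorem abs_sum_mul_le_Lp_mul_Lq {ι : Type*} (s : Finset ι) {w g : ι → ℝ}
    (hw : ∀ i ∈ s, 0 ≤ w i) {γ δ : ℝ} (hγδ : γ.HolderConjugate δ) :
    |∑ i ∈ s, w i * g i| ≤ (∑ i ∈ s, w i ^ γ) ^ (1 / γ) * (∑ i ∈ s, |g i| ^ δ) ^ (1 / δ) := by
  have holder := Real.inner_le_Lp_mul_Lq s w (fun i => |g i|) hγδ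
  simp only [abs_abs] at holder
  rw [sum_congr rfl fun i hi => show |w i| ^ γ = w i ^ γ by rw [abs_of_nonneg (hw i hi)]] at holder
  refine (abs_sum_le_sum_abs _ _).trans (le_of_eq_of_le (sum_congr rfl fun i hi => ?_) holder)
  rw [abs_mul, abs_of_nonneg (hw i hi)]

theorem Lr_le_of_abs_le_mul_rpow {ι : Type*} (s : Finset ι) {F K : ι → ℝ} {c B γ r : ℝ}
    (hc : 0 ≤ c) (hB : 0 ≤ B) (hK : ∀ j ∈ s, 0 ≤ K j) (hr : 0 < r)
    (hF : ∀ j ∈ s, |F j| ≤ c * K j ^ (1 / γ) * B) :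
    (∑ j ∈ s, |F j| ^ r) ^ (1 / r) ≤ c * (∑ j ∈ s, K j ^ (r / γ)) ^ (1 / r) * B := by
  have hterm : ∀ j ∈ s, (c * K j ^ (1 / γ) * B) ^ r = (c * B) ^ r * K j ^ (r / γ) := by
    intro j hj
    rw [mul_right_comm, Real.mul_rpow (by positivity) (Real.rpow_nonneg (hK j hj) _),
      ← Real.rpow_mul (hK j hj), one_div_mul_eq_div]
  calc (∑ j ∈ s, |F j| ^ r) ^ (1 / r)
      ≤ (∑ j ∈ s, (c * K j ^ (1 / γ) * B) ^ r) ^ (1 / r) := by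
        gcongr with j hj
        exact hF j hj
    _ = c * B * (∑ j ∈ s, K j ^ (r / γ)) ^ (1 / r) := by
        rw [sum_congr rfl hterm, ← mul_sum, Real.mul_rpow (by positivity)
          (sum_nonneg fun j hj => Real.rpow_nonneg (hK j hj) _), ← Real.rpow_mul (by positivity),
          mul_one_div_cancel hr.ne', Real.rpow_one]
    _ = _ := by ring

theorem gff_caputo_weight_nonneg {μ ν : ℝ} {p m a i j : ℕ} (hpμ : (p : ℝ) < μ)
    (hν : ν = m - μ) (hij : i + (a + m - p) ≤ j) :
    0 ≤ gff ((j : ℝ) - (a + ν + i) - 1) (μ - p - 1) := by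
  have : (i : ℝ) + a + m ≤ j + p := by exact_mod_cast (by omega : i + a + m ≤ j + p)
  exact div_nonneg (Real.Gamma_nonneg_of_nonneg (by rw [hν]; linarith))
    (Real.Gamma_nonneg_of_nonneg (by rw [hν]; linarith))

theorem abs_iterate_fdiff_le {μ ν γ δ : ℝ} {p m a j : ℕ} (hpμ : (p : ℝ) < μ) (hμm : μ < m)
    (hm : m = ⌈μ⌉₊) (hν : ν = m - μ) {f : ℝ → ℝ}
    (hz : ∀ k, p ≤ k → k ≤ m - 1 → fdiff^[k] f a = 0) (hγδ : γ.HolderConjugate δ)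
    (hj : a + m - p ≤ j) :
    |fdiff^[p] f j| ≤ 1 / Real.Gamma (μ - p) *
      ((∑ i ∈ range (j - (a + m - p) + 1), gff ((j : ℝ) - (a + ν + i) - 1) (μ - p - 1) ^ γ)
          ^ (1 / γ) *
        (∑ i ∈ range (j - (a + m - p) + 1), |caputo μ a f (a + ν + i)| ^ δ) ^ (1 / δ)) := by
  have hpm : p ≤ m := by exact_mod_cast (hpμ.trans hμm).le
  have hcast : (j : ℝ) = a + (m - p : ℕ) + (j - (a + m - p) : ℕ) := by norm_cast; omega
  have hrep : fdiff^[p] f j = fsum (μ - p) (a + ν) (caputo μ a f) j := by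
    rw [hcast]
    exact iterate_fdiff_eq_fsum_caputo hpμ hμm hm hν hz _
  have hfloor : ⌊(j : ℝ) - (μ - p) - (a + ν)⌋.toNat = j - (a + m - p) := by
    rw [show (j : ℝ) - (μ - p) - (a + ν) = ((j - (a + m - p) : ℕ) : ℝ) by
      rw [hcast, Nat.cast_sub hpm, hν]; ring, Int.floor_natCast, Int.toNat_natCast]
  rw [hrep, fsum, hfloor, abs_mul, abs_of_nonneg (by positivity)]
  refine mul_le_mul_of_nonneg_left (abs_sum_mul_le_Lp_mul_Lq _ (fun i hi => ?_) hγδ)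
    (by positivity)
  exact gff_caputo_weight_nonneg hpμ hν (by rw [mem_range] at hi; omega)

theorem stmt15_general (μ ν : ℝ) (p : ℕ) (hμ : (p : ℝ) < μ) (hni : ∀ n : ℤ, μ ≠ n)
    (m : ℕ) (hm : m = ⌈μ⌉₊) (hν : ν = m - μ) (f : ℝ → ℝ) (a b : ℕ)
    (hz : ∀ k, p ≤ k → k ≤ m - 1 → fdiff^[k] f a = 0)
    (γ δ r : ℝ) (hγ : 1 < γ) (hγδ : 1 / γ + 1 / δ = 1) (hr : 1 ≤ r) :
    (∑ j ∈ Finset.Icc (a + m - p) b, |fdiff^[p] f (j : ℝ)| ^ r) ^ (1 / r) ≤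
      (1 / Real.Gamma (μ - p)) *
        (∑ j ∈ Finset.Icc (a + m - p) b,
            (∑ i ∈ Finset.range (j - (a + m - p) + 1),
                gff ((j : ℝ) - (a + ν + i) - 1) (μ - p - 1) ^ γ) ^ (r / γ)) ^ (1 / r) *
        (∑ i ∈ Finset.range (b - (a + m - p) + 1), |caputo μ a f (a + ν + i)| ^ δ) ^ (1 / δ) := by
  have hμm : μ < m := (hm ▸ Nat.le_ceil μ).lt_of_ne (by exact_mod_cast hni m)
  have hconj : γ.HolderConjugate δ :=
    Real.holderConjugate_iff.2 ⟨hγ, by simpa only [one_div] using hγδ⟩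
  have hweight : ∀ j ∈ Icc (a + m - p) b, ∀ i ∈ range (j - (a + m - p) + 1),
      0 ≤ gff ((j : ℝ) - (a + ν + i) - 1) (μ - p - 1) := fun j hj i hi =>
    gff_caputo_weight_nonneg hμ hν (by simp only [mem_Icc, mem_range] at hj hi; omega)
  refine Lr_le_of_abs_le_mul_rpow _ (by positivity) (by positivity)
    (fun j hj => sum_nonneg fun i hi => Real.rpow_nonneg (hweight j hj i hi) _) (by linarith)
    fun j hj => ?_
  refine (abs_iterate_fdiff_le hμ hμm hm hν hz hconj (mem_Icc.1 hj).1).trans ?_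
  rw [mul_assoc]
  gcongr
  · exact Real.rpow_nonneg (sum_nonneg fun i hi => Real.rpow_nonneg (hweight j hj i hi) _) _
  · exact hconj.symm.one_div_nonneg
  · exact (mem_Icc.1 hj).2

theorem stmt15 (μ ν : ℝ) (p : ℕ) (hμ : (p : ℝ) < μ) (hni : ∀ n : ℤ, μ ≠ n)
    (m : ℕ) (hm : m = ⌈μ⌉₊) (hν : ν = m - μ) (f : ℝ → ℝ) (a b : ℕ)
    (hb : a + m - p ≤ b) (hz : ∀ k, p ≤ k → k ≤ m - 1 → fdiff^[k] f a = 0)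
    (γ δ r : ℝ) (hγ : 1 < γ) (hδ : 1 < δ) (hγδ : 1 / γ + 1 / δ = 1) (hr : 1 ≤ r) :
    (∑ j ∈ Finset.Icc (a + m - p) b, |fdiff^[p] f (j : ℝ)| ^ r) ^ (1 / r) ≤
      (1 / Real.Gamma (μ - p)) *
        (∑ j ∈ Finset.Icc (a + m - p) b,
            (∑ i ∈ Finset.range (j - (a + m - p) + 1),
                gff ((j : ℝ) - (a + ν + i) - 1) (μ - p - 1) ^ γ) ^ (r / γ)) ^ (1 / r) *
        (∑ i ∈ Finset.range (b - (a + m - p) + 1), |caputo μ a f (a + ν + i)| ^ δ) ^ (1 / δ) :=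
  stmt15_general μ ν p hμ hni m hm hν f a b hz γ δ r hγ hγδ hr
end
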